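/- arXiv:1104.3991 — 3 statements merged into one kernel-verified Lean document; each statement's English description precedes it below -/
import Mathlib

section
/- Let H be a finitely generated subgroup of F_k. Then the function n ↦ Prob[ α(w)(1) = 1 for all w ∈ H ], where α is a uniformly random homomorphism F_k → S_n, agrees with a rational function of n for all sufficiently large n: there exist polynomials p, q with integer coefficients and an integer N such that for all n ≥ N, q(n) ≠ 0 and Prob[ α(w)(1) = 1 for all w ∈ H ] = p(n)/q(n). -/
/-!
Write `H = ⟨S⟩` with `S` finite and glue the reduced words of `S` into one graph: a base
vertex, and for each word a path whose edges are labelled by the generators. A tuple `σ ∈ S_n^k`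
makes `H` fix `1` exactly when, for each word, the walk that reads the word backwards from `1`
closes up; recording these walks identifies such tuples with pairs `(q, σ)`, where `q` maps the
vertices to `{1, …, n}`, sends the base vertex and every word end to `1`, and each `σ i` extends
the partial map read off the `i`-edges.

Sort the maps `q` by their kernel `s`. There are `(n - 1)_(c - 1)` of them (with `c`
classes), and each has `∏ᵢ (n - eᵢ)!` extensions, where `eᵢ` counts the `i`-edges of the
quotient graph, or none if the quotient is not folded. After dividing by `(n!)^k` each of the
finitely many kernels contributes `(n - 1)_(c - 1) ∏ᵢ 1 / (n)_(eᵢ)`, a rational function of `n`.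
-/

open Finset Function Equiv
open scoped Nat

section PermCount

variable {β T : Type*} [Fintype β] [DecidableEq β]

theorem Equiv.Perm.card_forall_mem_apply_eq_self (S : Finset β) :
    #{τ : Perm β | ∀ b ∈ S, τ b = b} = (Fintype.card β - #S)! := by
  rw [← Fintype.card_subtype, ← Fintype.card_coe S, ← Fintype.card_subtype_compl,
    ← Fintype.card_perm, Fintype.card_congr (Perm.subtypeEquivSubtypePerm (· ∉ S))]
  exact Fintype.card_congr (Equiv.subtypeEquivRight fun τ => by simp only [not_not])

omit [Fintype β] [DecidableEq β] in
theorem Equiv.Perm.exists_forall_apply_eq [Finite T] (u v : T → β)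
    (huv : ∀ t t', u t = u t' ↔ v t = v t') : ∃ π : Perm β, ∀ t, π (u t) = v t := by
  obtain ⟨π, hπ⟩ := Perm.exists_extending_pair (Setoid.kerLift u)
    (Quotient.lift v fun t t' h => (huv t t').mp h) (Setoid.kerLift_injective u)
    (by rintro ⟨t⟩ ⟨t'⟩ h; exact Quotient.sound ((huv t t').mpr h))
  exact ⟨π, fun t => hπ ⟦t⟧⟩

theorem Equiv.Perm.card_forall_apply_eq_of_iff [Fintype T] (u v : T → β)
    (huv : ∀ t t', u t = u t' ↔ v t = v t') :
    #{π : Perm β | ∀ t, π (u t) = v t} = (Fintype.card β - #(univ.image u))! := by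
  obtain ⟨π₀, hπ₀⟩ := Perm.exists_forall_apply_eq u v huv
  rw [← Perm.card_forall_mem_apply_eq_self]
  refine card_nbij' (π₀⁻¹ * ·) (π₀ * ·) ?_ ?_ (fun π _ => by simp) (fun τ _ => by simp)
  · intro π hπ
    simp only [coe_filter, mem_univ, true_and, Set.mem_ofPred_eq, forall_mem_image,
      true_implies] at hπ ⊢
    intro t
    rw [Perm.mul_apply, hπ t, ← hπ₀ t, Perm.inv_eq_iff_eq]
  · intro τ hτ
    simp only [coe_filter, mem_univ, true_and, Set.mem_ofPred_eq, forall_mem_image,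
      true_implies] at hτ ⊢
    intro t
    rw [Perm.mul_apply, hτ, hπ₀ t]

theorem Equiv.Perm.card_forall_apply_eq [Fintype T] (u v : T → β) :
    #{π : Perm β | ∀ t, π (u t) = v t} =
      if ∀ t t', u t = u t' ↔ v t = v t' then (Fintype.card β - #(univ.image u))! else 0 := by
  split_ifs with huv
  · exact Perm.card_forall_apply_eq_of_iff u v huv
  · rw [card_eq_zero, filter_eq_empty_iff]
    rintro π - hπ
    exact huv fun t t' => by rw [← hπ t, ← hπ t', π.injective.eq_iff]

end PermCount

section KernelCount

variable {V β : Type*}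

def Setoid.kerEqEquivEmbedding (s : Setoid V) :
    {q : V → β // Setoid.ker q = s} ≃ (Quotient s ↪ β) where
  toFun q := ⟨Quotient.lift q.1 fun _ _ h => Setoid.ker_def.mp (q.2.symm ▸ h), by
    rintro ⟨a⟩ ⟨b⟩ h
    exact Quotient.sound (show s a b from q.2 ▸ Setoid.ker_def.mpr h)⟩
  invFun f := ⟨f ∘ Quotient.mk s, Setoid.ext fun a b => by
    rw [Setoid.ker_def, comp_apply, comp_apply, f.injective.eq_iff, Quotient.eq]⟩
  left_inv _ := rfl
  right_inv f := by ext ⟨a⟩; rfl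

def Function.Embedding.subtypeApplyEqEquiv [DecidableEq V] (a : V) (b : β) :
    {f : V ↪ β // f a = b} ≃ ({x // x ≠ a} ↪ {y // y ≠ b}) where
  toFun f := ⟨fun x => ⟨f.1 x, (f.1.injective.ne x.2).trans_eq f.2⟩,
    fun _ _ h => Subtype.ext (f.1.injective (congrArg Subtype.val h))⟩
  invFun g := ⟨⟨fun x => if h : x = a then b else g ⟨x, h⟩, by
    intro x y hxy
    by_cases hx : x = a <;> by_cases hy : y = a <;> simp only [hx, hy, dite_true, dite_false] at hxy
    · exact hx.trans hy.symm
    · exact absurd hxy.symm (g _).2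
    · exact absurd hxy (g _).2
    · exact congrArg Subtype.val (g.injective (Subtype.ext hxy))⟩, dif_pos rfl⟩
  left_inv f := by
    ext x
    by_cases hx : x = a
    · simp [hx, f.2]
    · simp [hx]; rfl
  right_inv g := by ext x; simp [x.2]

theorem Setoid.card_ker_eq_and_apply_eq [Finite V] [Fintype β]
    (s : Setoid V) (b₀ : V) (pt : β) :
    Nat.card {q : V → β // Setoid.ker q = s ∧ q b₀ = pt} =
      (Fintype.card β - 1).descFactorial (Nat.card (Quotient s) - 1) := by
  classical
  have : Fintype V := Fintype.ofFinite V
  let e := (Equiv.subtypeSubtypeEquivSubtypeInter (fun q : V → β => Setoid.ker q = s)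
      (fun q => q b₀ = pt)).symm.trans <|
    ((Setoid.kerEqEquivEmbedding s).subtypeEquiv fun q => Iff.rfl).trans
      (Function.Embedding.subtypeApplyEqEquiv ⟦b₀⟧ pt)
  rw [Nat.card_congr e, Nat.card_eq_fintype_card, Fintype.card_embedding_eq,
    Nat.card_eq_fintype_card]
  simp [Fintype.card_subtype_compl]

instance Setoid.instFinite [Finite V] : Finite (Setoid V) :=
  Finite.of_injective (fun s : Setoid V => s.r) fun _ _ h => Setoid.ext fun a b => by
    simp only at h; rw [h]

noncomputable instance [Finite V] : Fintype (Setoid V) := Fintype.ofFinite _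

theorem Setoid.sum_ker_of_apply_eq {M : Type*} [AddCommMonoid M] [Fintype V] [DecidableEq V]
    [Fintype β] [DecidableEq β] (b₀ : V) (pt : β) (G : Setoid V → M) :
    ∑ q : V → β with q b₀ = pt, G (Setoid.ker q) =
      ∑ s : Setoid V,
        (Fintype.card β - 1).descFactorial (Nat.card (Quotient s) - 1) • G s := by
  classical
  rw [← Finset.sum_fiberwise _ Setoid.ker]
  refine Finset.sum_congr rfl fun s _ => ?_
  rw [Finset.sum_congr rfl fun q hq => by rw [(mem_filter.mp hq).2], sum_const, filter_filter,
    ← Setoid.card_ker_eq_and_apply_eq s b₀ pt, Nat.card_eq_fintype_card,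
    ← Fintype.card_subtype]
  simp only [and_comm]

end KernelCount

section LabelledGraph

variable {ι V E β : Type*} (label : E → ι) (src tgt : E → V)

def Setoid.IsFoldedAt (s : Setoid V) (i : ι) : Prop :=
  ∀ e e' : {e // label e = i}, s (src e) (src e') ↔ s (tgt e) (tgt e')

noncomputable def Setoid.sourceClassCount (s : Setoid V) (i : ι) : ℕ :=
  Nat.card (Set.range fun e : {e // label e = i} => (⟦src e⟧ : Quotient s))

open Classical in
noncomputable def Setoid.extensionCount (s : Setoid V) (i : ι) (n : ℕ) : ℕ :=
  if s.IsFoldedAt label src tgt i then (n - s.sourceClassCount label src i)! else 0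

variable [DecidableEq ι] [Fintype E] [Fintype β] [DecidableEq β]

theorem card_perm_label_eq_extensionCount (q : V → β) (i : ι) :
    #{π : Perm β | ∀ e : {e // label e = i}, π (q (src e)) = q (tgt e)} =
      (Setoid.ker q).extensionCount label src tgt i (Fintype.card β) := by
  classical
  rw [Perm.card_forall_apply_eq, Setoid.extensionCount]
  congr 1
  rw [Setoid.sourceClassCount, ← Nat.card_image_of_injective (Setoid.kerLift_injective q),
    ← Set.range_comp, Nat.card_eq_card_toFinset, Set.toFinset_range]
  rfl

theorem card_forall_label_eq_prod [Fintype ι] (q : V → β) :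
    #{σ : ι → Perm β | ∀ e, σ (label e) (q (src e)) = q (tgt e)} =
      ∏ i, (Setoid.ker q).extensionCount label src tgt i (Fintype.card β) := by
  simp_rw [← card_perm_label_eq_extensionCount, ← Fintype.card_subtype, ← Fintype.card_pi]
  refine Fintype.card_congr ((Equiv.subtypeEquivRight fun σ => ?_).trans Equiv.subtypePiEquivPi)
  exact ⟨fun h i ⟨e, he⟩ => he ▸ h e, fun h e => h (label e) ⟨e, rfl⟩⟩

end LabelledGraph

section WordGraph

variable {ι J β : Type*} (w : J → List (ι × Bool))

def letterPerm (σ : ι → Perm β) (x : ι × Bool) : Perm β := cond x.2 (σ x.1) (σ x.1)⁻¹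

def wordPerm (σ : ι → Perm β) (l : List (ι × Bool)) : Perm β := (l.map (letterPerm σ)).prod

theorem FreeGroup.lift_apply_eq_wordPerm [DecidableEq ι] (σ : ι → Perm β) (g : FreeGroup ι) :
    FreeGroup.lift σ g = wordPerm σ g.toWord := by
  conv_lhs => rw [← FreeGroup.mk_toWord (x := g)]
  rw [FreeGroup.lift_mk]
  rfl

/-- `none` is the base vertex and `some ⟨j, t⟩` is position `t` along `w j`; `wordPath` sends it
to the image of the base point under the suffix of `w j` that starts at `t`. -/
abbrev WordVertex := Option (Σ j, Fin ((w j).length + 1))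

abbrev WordEdge := Σ j, Fin (w j).length

def wordEdgeLabel (e : WordEdge w) : ι := ((w e.1)[e.2]).1

-- A letter `(i, false)` acts by `(σ i)⁻¹`, so its edge is traversed against the word.
def wordEdgeSrc (e : WordEdge w) : WordVertex w :=
  some ⟨e.1, cond ((w e.1)[e.2]).2 e.2.succ e.2.castSucc⟩

def wordEdgeTgt (e : WordEdge w) : WordVertex w :=
  some ⟨e.1, cond ((w e.1)[e.2]).2 e.2.castSucc e.2.succ⟩

def wordPath (σ : ι → Perm β) (pt : β) : WordVertex w → β
  | none => pt
  | some v => wordPerm σ ((w v.1).drop v.2) pt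

variable (σ : ι → Perm β) (pt : β)

theorem wordPath_last (j : J) : wordPath w σ pt (some ⟨j, Fin.last _⟩) = pt := by
  simp [wordPath, wordPerm]

theorem wordPath_castSucc (j : J) (t : Fin (w j).length) :
    wordPath w σ pt (some ⟨j, t.castSucc⟩) =
      letterPerm σ (w j)[t] (wordPath w σ pt (some ⟨j, t.succ⟩)) := by
  simp only [wordPath, wordPerm, Fin.val_castSucc, Fin.val_succ, List.drop_eq_getElem_cons t.2,
    List.map_cons, List.prod_cons, Perm.mul_apply]
  rfl

theorem forall_wordEdge_iff (q : WordVertex w → β) :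
    (∀ e, σ (wordEdgeLabel w e) (q (wordEdgeSrc w e)) = q (wordEdgeTgt w e)) ↔
      ∀ j (t : Fin (w j).length),
        letterPerm σ (w j)[t] (q (some ⟨j, t.succ⟩)) = q (some ⟨j, t.castSucc⟩) := by
  refine ⟨fun h j t => ?_, fun h e => ?_⟩
  · have := h ⟨j, t⟩
    simp only [wordEdgeLabel, wordEdgeSrc, wordEdgeTgt] at this
    cases hb : ((w j)[t]).2 <;> simp only [letterPerm, hb, cond_true, cond_false] at this ⊢
    · exact Perm.inv_eq_iff_eq.mpr this.symm
    · exact this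
  · have := h e.1 e.2
    simp only [wordEdgeLabel, wordEdgeSrc, wordEdgeTgt]
    cases hb : ((w e.1)[e.2]).2 <;> simp only [letterPerm, hb, cond_true, cond_false] at this ⊢
    · exact (Perm.inv_eq_iff_eq.mp this).symm
    · exact this

theorem eq_wordPath (q : WordVertex w → β) (h_none : q none = pt)
    (h_last : ∀ j, q (some ⟨j, Fin.last _⟩) = pt)
    (h_step : ∀ j (t : Fin (w j).length),
      letterPerm σ (w j)[t] (q (some ⟨j, t.succ⟩)) = q (some ⟨j, t.castSucc⟩)) :
    q = wordPath w σ pt := by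
  funext v
  rcases v with _ | ⟨j, t, ht⟩
  · exact h_none
  refine Nat.decreasingInduction
    (motive := fun t ht => q (some ⟨j, ⟨t, Nat.lt_succ_of_le ht⟩⟩) =
      wordPath w σ pt (some ⟨j, ⟨t, Nat.lt_succ_of_le ht⟩⟩)) (fun t ht ih => ?_) ?_
    (Nat.le_of_lt_succ ht)
  · exact (h_step j ⟨t, ht⟩).symm.trans
      ((congrArg _ ih).trans (wordPath_castSucc w σ pt j ⟨t, ht⟩).symm)
  · exact (h_last j).trans (wordPath_last w σ pt j).symm

def PinsWordEnds (s : Setoid (WordVertex w)) : Prop :=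
  ∀ j, s (some ⟨j, 0⟩) none ∧ s (some ⟨j, Fin.last _⟩) none

theorem forall_wordPerm_and_wordPath_eq_iff (q : WordVertex w → β) :
    ((∀ j, wordPerm σ (w j) pt = pt) ∧ wordPath w σ pt = q) ↔
      (q none = pt ∧ PinsWordEnds w (Setoid.ker q)) ∧
        ∀ e, σ (wordEdgeLabel w e) (q (wordEdgeSrc w e)) = q (wordEdgeTgt w e) := by
  constructor
  · rintro ⟨h_fix, rfl⟩
    refine ⟨⟨rfl, fun j =>
        ⟨Setoid.ker_def.mpr (h_fix j), Setoid.ker_def.mpr (wordPath_last w σ pt j)⟩⟩,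
      (forall_wordEdge_iff w σ _).mpr fun j t => (wordPath_castSucc w σ pt j t).symm⟩
  · rintro ⟨⟨h_none, h_pin⟩, h_edge⟩
    obtain rfl := eq_wordPath w σ pt q h_none
      (fun j => (Setoid.ker_def.mp (h_pin j).2).trans h_none)
      ((forall_wordEdge_iff w σ q).mp h_edge)
    exact ⟨fun j => (Setoid.ker_def.mp (h_pin j).1).trans h_none, rfl⟩

open Classical in
theorem card_forall_wordPerm_apply_eq [Fintype ι] [DecidableEq ι] [Fintype J] [DecidableEq J]
    [Fintype β] [DecidableEq β] :
    #{σ : ι → Perm β | ∀ j, wordPerm σ (w j) pt = pt} =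
      ∑ s : Setoid (WordVertex w),
        (Fintype.card β - 1).descFactorial (Nat.card (Quotient s) - 1) *
          if PinsWordEnds w s then
            ∏ i, s.extensionCount (wordEdgeLabel w) (wordEdgeSrc w) (wordEdgeTgt w) i
              (Fintype.card β)
          else 0 := by
  simp_rw [← smul_eq_mul, ← Setoid.sum_ker_of_apply_eq none pt, sum_filter]
  rw [card_eq_sum_card_fiberwise (f := fun σ => wordPath w σ pt) (t := univ)
    fun _ _ => mem_univ _]
  refine sum_congr rfl fun q _ => ?_
  rw [filter_filter]
  simp_rw [forall_wordPerm_and_wordPath_eq_iff]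
  by_cases h : q none = pt ∧ PinsWordEnds w (Setoid.ker q)
  · rw [if_pos h.1, if_pos h.2, ← card_forall_label_eq_prod]
    simp only [h, true_and]
  · rw [← ite_and, if_neg h]
    simp [h]

end WordGraph

section FreeGroup

variable {ι β : Type*} [DecidableEq ι]

theorem MonoidHom.forall_mem_closure_apply_eq_iff {G : Type*} [Group G] (ρ : G →* Perm β)
    (S : Set G) (x : β) : (∀ g ∈ Subgroup.closure S, ρ g x = x) ↔ ∀ g ∈ S, ρ g x = x :=
  Subgroup.closure_le (K := (MulAction.stabilizer (Perm β) x).comap ρ)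

theorem card_hom_forall_mem_closure_apply_eq [Fintype ι] [Fintype β] [DecidableEq β]
    (S : Finset (FreeGroup ι)) (pt : β) :
    Nat.card {α : FreeGroup ι →* Perm β // ∀ g ∈ Subgroup.closure (S : Set (FreeGroup ι)),
        α g pt = pt} =
      #{σ : ι → Perm β | ∀ g : S, wordPerm σ (g : FreeGroup ι).toWord pt = pt} := by
  rw [← Fintype.card_subtype, ← Nat.card_eq_fintype_card]
  refine (Nat.card_congr (FreeGroup.lift.subtypeEquiv fun σ => ?_)).symm
  rw [MonoidHom.forall_mem_closure_apply_eq_iff]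
  simp [FreeGroup.lift_apply_eq_wordPerm]

end FreeGroup

open Polynomial Filter

def IsEventuallyRational (f : ℕ → ℝ) : Prop :=
  ∃ p q : ℤ[X], ∀ᶠ n : ℕ in atTop,
    q.eval (n : ℤ) ≠ 0 ∧
      f n = ((p.eval (n : ℤ) : ℤ) : ℝ) / ((q.eval (n : ℤ) : ℤ) : ℝ)

namespace IsEventuallyRational

variable {f g : ℕ → ℝ}

theorem congr (hf : IsEventuallyRational f) (h : f =ᶠ[atTop] g) : IsEventuallyRational g := by
  obtain ⟨p, q, hpq⟩ := hf
  exact ⟨p, q, by filter_upwards [hpq, h] with n ⟨hq, hfn⟩ hn; exact ⟨hq, hn ▸ hfn⟩⟩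

theorem zero : IsEventuallyRational 0 :=
  ⟨0, 1, Eventually.of_forall fun n => by simp⟩

theorem one : IsEventuallyRational 1 :=
  ⟨1, 1, Eventually.of_forall fun n => by simp⟩

theorem add (hf : IsEventuallyRational f) (hg : IsEventuallyRational g) :
    IsEventuallyRational (f + g) := by
  obtain ⟨p₁, q₁, h₁⟩ := hf
  obtain ⟨p₂, q₂, h₂⟩ := hg
  refine ⟨p₁ * q₂ + p₂ * q₁, q₁ * q₂, ?_⟩
  filter_upwards [h₁, h₂] with n ⟨hq₁, hf⟩ ⟨hq₂, hg⟩
  have hq₁' : ((q₁.eval (n : ℤ) : ℤ) : ℝ) ≠ 0 := by exact_mod_cast hq₁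
  have hq₂' : ((q₂.eval (n : ℤ) : ℤ) : ℝ) ≠ 0 := by exact_mod_cast hq₂
  refine ⟨by simp [hq₁, hq₂], ?_⟩
  rw [Pi.add_apply, hf, hg]
  push_cast [eval_add, eval_mul]
  field_simp

theorem mul (hf : IsEventuallyRational f) (hg : IsEventuallyRational g) :
    IsEventuallyRational (f * g) := by
  obtain ⟨p₁, q₁, h₁⟩ := hf
  obtain ⟨p₂, q₂, h₂⟩ := hg
  refine ⟨p₁ * p₂, q₁ * q₂, ?_⟩
  filter_upwards [h₁, h₂] with n ⟨hq₁, hf⟩ ⟨hq₂, hg⟩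
  refine ⟨by simp [hq₁, hq₂], ?_⟩
  rw [Pi.mul_apply, hf, hg]
  push_cast [eval_mul]
  rw [mul_div_mul_comm]

theorem sum {α : Type*} (s : Finset α) {f : α → ℕ → ℝ}
    (hf : ∀ a ∈ s, IsEventuallyRational (f a)) :
    IsEventuallyRational fun n => ∑ a ∈ s, f a n := by
  simp_rw [← Finset.sum_apply]
  exact Finset.sum_induction _ _ (fun _ _ => add) zero hf

theorem prod {α : Type*} (s : Finset α) {f : α → ℕ → ℝ}
    (hf : ∀ a ∈ s, IsEventuallyRational (f a)) :
    IsEventuallyRational fun n => ∏ a ∈ s, f a n := by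
  simp_rw [← Finset.prod_apply]
  exact Finset.prod_induction _ _ (fun _ _ => mul) one hf

theorem ite (c : Prop) [Decidable c] (hf : IsEventuallyRational f) (hg : IsEventuallyRational g) :
    IsEventuallyRational fun n => if c then f n else g n := by
  split_ifs
  exacts [hf, hg]

theorem descFactorial_sub_one (j : ℕ) :
    IsEventuallyRational fun n => ((n - 1).descFactorial j : ℝ) := by
  refine ⟨(descPochhammer ℤ j).comp (X - 1), 1, ?_⟩
  filter_upwards [eventually_ge_atTop 1] with n hn
  refine ⟨by simp, ?_⟩
  rw [eval_comp, eval_sub, eval_X, eval_one, ← Nat.cast_one (R := ℤ), ← Nat.cast_sub hn,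
    descPochhammer_eval_eq_descFactorial]
  simp

theorem factorial_sub_div_factorial (e : ℕ) :
    IsEventuallyRational fun n => ((n - e)! : ℝ) / n ! := by
  refine ⟨1, descPochhammer ℤ e, ?_⟩
  filter_upwards [eventually_ge_atTop e] with n hn
  rw [descPochhammer_eval_eq_descFactorial]
  have hpos : 0 < n.descFactorial e := Nat.descFactorial_pos.mpr hn
  refine ⟨by exact_mod_cast hpos.ne', ?_⟩
  rw [← Nat.factorial_mul_descFactorial hn, eval_one]
  push_cast
  field_simp

end IsEventuallyRational

open Classical in
theorem isEventuallyRational_card_hom_forall_mem_closure {ι : Type*} [Fintype ι] [DecidableEq ι]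
    (S : Finset (FreeGroup ι)) :
    IsEventuallyRational fun n => (Nat.card {α : FreeGroup ι →* Perm (Fin n) //
        ∀ g ∈ Subgroup.closure (S : Set (FreeGroup ι)), ∀ hn : 0 < n,
          α g ⟨0, hn⟩ = ⟨0, hn⟩} : ℝ) / (n ! : ℝ) ^ Fintype.card ι := by
  let w : S → List (ι × Bool) := fun g => (g : FreeGroup ι).toWord
  have key : IsEventuallyRational fun n => ∑ s : Setoid (WordVertex w),
      ((n - 1).descFactorial (Nat.card (Quotient s) - 1) : ℝ) *
        if PinsWordEnds w s then
          ∏ i, (s.extensionCount (wordEdgeLabel w) (wordEdgeSrc w) (wordEdgeTgt w) i n : ℝ) /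
            n !
        else 0 := by
    refine .sum _ fun s _ =>
      (IsEventuallyRational.descFactorial_sub_one _).mul (.ite _ (.prod _ fun i _ => ?_) .zero)
    by_cases h : s.IsFoldedAt (wordEdgeLabel w) (wordEdgeSrc w) (wordEdgeTgt w) i
    · simpa only [Setoid.extensionCount, if_pos h] using .factorial_sub_div_factorial _
    · simpa only [Setoid.extensionCount, if_neg h, Nat.cast_zero, zero_div] using .zero
  refine key.congr ?_
  filter_upwards [eventually_gt_atTop 0] with n hn
  simp only [forall_prop_of_true hn]
  rw [card_hom_forall_mem_closure_apply_eq, card_forall_wordPerm_apply_eq w, Fintype.card_fin,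
    Nat.cast_sum, sum_div]
  refine sum_congr rfl fun s _ => ?_
  split_ifs
  · rw [prod_div_distrib, prod_const, card_univ]
    push_cast
    ring
  · simp

/-- for a finitely generated subgroup `H ≤ F_k`, the probability that `1` is a
common fixed point of the image of `H` under a uniformly random homomorphism `F_k →* S_n`
agrees, for all sufficiently large `n`, with a rational function of `n`: there are integer
polynomials `p, q` and `N : ℕ` such that for all `n ≥ N` the denominator does not vanish and
the probability equals `p(n) / q(n)`. -/
theorem prob_common_fixed_point_eventually_rational {k : ℕ}
    (H : Subgroup (FreeGroup (Fin k))) (hFG : Group.FG ↥H) :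
    ∃ (p q : Polynomial ℤ) (N : ℕ), ∀ n : ℕ, N ≤ n →
      (q.eval (n : ℤ) ≠ 0) ∧
      (Nat.card {α : FreeGroup (Fin k) →* Equiv.Perm (Fin n) //
            ∀ w ∈ H, ∀ hn : 0 < n, α w ⟨0, hn⟩ = ⟨0, hn⟩} : ℝ) / ((n.factorial : ℝ) ^ k)
        = (Int.cast (p.eval (n : ℤ)) : ℝ) / (Int.cast (q.eval (n : ℤ)) : ℝ) := by
  obtain ⟨S, rfl⟩ := (Group.fg_iff_subgroup_fg H).mp hFG
  obtain ⟨p, q, h⟩ := isEventuallyRational_card_hom_forall_mem_closure S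
  rw [Fintype.card_fin] at h
  obtain ⟨N, hN⟩ := eventually_atTop.mp h
  exact ⟨p, q, N, hN⟩
end

section
/- Let w ∈ F_k be measure preserving and let x_1 be an element of a basis of F_k. Then for every finite group G and every g ∈ G, the number of surjective homomorphisms α : F_k → G with α(w) = g equals the number of surjective homomorphisms α : F_k → G with α(x_1) = g. -/
/-- A subset `s` of a group `G` is a free basis of `G` if the induced homomorphism
`FreeGroup s →* G` is bijective, i.e. `s` freely generates `G`. -/
def IsFreeBasis {G : Type*} [Group G] (s : Set G) : Prop :=
  Function.Bijective (FreeGroup.lift ((↑) : s → G) : FreeGroup s →* G)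

/-- A word `w ∈ F_k` is measure preserving if for every finite group `G` and every `g ∈ G`,
the number of homomorphisms `α : F_k →* G` with `α w = g` equals `|G| ^ (k-1)`. -/
def IsMeasurePreservingWord {k : ℕ} (w : FreeGroup (Fin k)) : Prop :=
  ∀ (G : Type) [Group G] [Fintype G] (g : G),
    Nat.card {α : FreeGroup (Fin k) →* G // α w = g} = Fintype.card G ^ (k - 1)

/-!
Write `N_u(G, g)` for the number of homomorphisms `F_k → G` sending `u` to `g`, and `S_u(G, g)`
for the number of surjective ones. Sorting homomorphisms by their image gives
`N_u(G, g) = ∑_{H ≤ G} S_u(H, g)`, so by induction on `|G|` the counts `S_u` are determined by the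
counts `N_u`. For a basis element `x₁` the fibres `N_{x₁}(G, ·)` are all equal (only the image
of `x₁` is constrained), and so are those of a measure preserving `w`; as both families of fibres
partition `Hom(F_k, G)`, `N_w = N_{x₁}`.
-/

open Function

theorem Nat.card_fiber_eq_of_forall_card_fiber_eq {X Y : Type*} [Finite X] [Finite Y]
    {p q : X → Y} (hp : ∀ y y', Nat.card {x // p x = y} = Nat.card {x // p x = y'})
    (hq : ∀ y y', Nat.card {x // q x = y} = Nat.card {x // q x = y'}) (y : Y) :
    Nat.card {x // p x = y} = Nat.card {x // q x = y} := by
  have : Fintype Y := Fintype.ofFinite Y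
  have card_mul_card_fiber : ∀ r : X → Y,
      (∀ y', Nat.card {x // r x = y'} = Nat.card {x // r x = y}) →
        Nat.card Y * Nat.card {x // r x = y} = Nat.card X := fun r hr => by
    rw [← Nat.card_congr (Equiv.sigmaFiberEquiv r), Nat.card_sigma,
      Finset.sum_congr rfl fun y' _ => hr y', Finset.sum_const, Finset.card_univ,
      smul_eq_mul, Nat.card_eq_fintype_card]
  have : 0 < Nat.card Y := Nat.card_pos_iff.2 ⟨⟨y⟩, inferInstance⟩
  exact Nat.eq_of_mul_eq_mul_left this <|
    (card_mul_card_fiber p (hp · y)).trans (card_mul_card_fiber q (hq · y)).symm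

instance FreeGroup.finite_monoidHom {α G : Type*} [Finite α] [Group G] [Finite G] :
    Finite (FreeGroup α →* G) :=
  Finite.of_equiv _ FreeGroup.lift

section RangeDecomposition

variable {F G : Type*} [Group F] [Group G]

def MonoidHom.rangeEqEquivSurjective (u : F) (g : G) (H : Subgroup G) :
    {α : F →* G // α u = g ∧ α.range = H} ≃
      {β : F →* H // Surjective β ∧ (β u : G) = g} where
  toFun α := ⟨α.1.codRestrict H fun x => α.2.2.le ⟨x, rfl⟩, by
    refine ⟨?_, α.2.1⟩
    rintro ⟨y, hy⟩
    obtain ⟨x, rfl⟩ := α.2.2 ▸ hy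
    exact ⟨x, rfl⟩⟩
  invFun β := ⟨H.subtype.comp β, β.2.2, by
    rw [MonoidHom.range_comp, MonoidHom.range_eq_top.2 β.2.1, ← MonoidHom.range_eq_map,
      Subgroup.range_subtype]⟩
  left_inv _ := rfl
  right_inv _ := rfl

theorem MonoidHom.card_apply_eq_sum_card_surjective [Finite (F →* G)] [Fintype (Subgroup G)]
    (u : F) (g : G) :
    Nat.card {α : F →* G // α u = g} =
      ∑ H : Subgroup G, Nat.card {β : F →* H // Surjective β ∧ (β u : G) = g} := by
  rw [← Nat.card_congr (Equiv.sigmaFiberEquiv fun α : {α : F →* G // α u = g} => α.1.range),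
    Nat.card_sigma]
  refine Finset.sum_congr rfl fun H _ => Nat.card_congr ?_
  exact (Equiv.subtypeSubtypeEquivSubtypeInter _ fun α : F →* G => α.range = H).trans
    (MonoidHom.rangeEqEquivSurjective u g H)

theorem MonoidHom.card_surjective_top (u : F) (g : G) :
    Nat.card {β : F →* (⊤ : Subgroup G) // Surjective β ∧ (β u : G) = g} =
      Nat.card {α : F →* G // Surjective α ∧ α u = g} := by
  rw [← Nat.card_congr (MonoidHom.rangeEqEquivSurjective u g ⊤)]
  exact Nat.card_congr <| Equiv.subtypeEquivRight fun α => by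
    rw [MonoidHom.range_eq_top, and_comm]

theorem MonoidHom.card_surjective_subgroup_congr {u v : F} {H : Subgroup G}
    (h : ∀ h : H, Nat.card {β : F →* H // Surjective β ∧ β u = h} =
      Nat.card {β : F →* H // Surjective β ∧ β v = h}) (g : G) :
    Nat.card {β : F →* H // Surjective β ∧ (β u : G) = g} =
      Nat.card {β : F →* H // Surjective β ∧ (β v : G) = g} := by
  by_cases hg : g ∈ H
  · simpa only [Subtype.ext_iff] using h ⟨g, hg⟩
  · have (w : F) : IsEmpty {β : F →* H // Surjective β ∧ (β w : G) = g} :=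
      ⟨fun β => hg (β.2.2 ▸ (β.1 w).2)⟩
    rw [Nat.card_of_isEmpty, Nat.card_of_isEmpty]

end RangeDecomposition

noncomputable def IsFreeBasis.freeGroupBasis {G : Type*} [Group G] {s : Set G}
    (hs : IsFreeBasis s) : FreeGroupBasis s G :=
  .ofRepr (MulEquiv.ofBijective _ hs).symm

theorem IsFreeBasis.freeGroupBasis_apply {G : Type*} [Group G] {s : Set G} (hs : IsFreeBasis s)
    (i : s) : hs.freeGroupBasis i = i :=
  FreeGroup.lift_apply_of

theorem FreeGroupBasis.card_monoidHom_apply_eq {ι F G : Type*} [Group F] [Group G]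
    (b : FreeGroupBasis ι F) (i : ι) (g g' : G) :
    Nat.card {φ : F →* G // φ (b i) = g} = Nat.card {φ : F →* G // φ (b i) = g'} := by
  classical
  have restrict (g : G) : {φ : F →* G // φ (b i) = g} ≃ {f : ι → G // f i = g} :=
    Equiv.subtypeEquiv b.lift.symm fun _ => Iff.rfl
  rw [Nat.card_congr (restrict g), Nat.card_congr (restrict g')]
  -- right multiplication by `Pi.mulSingle i (g⁻¹ * g')` only moves the `i`-th coordinate
  refine Nat.card_congr (Equiv.subtypeEquiv (Equiv.mulRight (Pi.mulSingle i (g⁻¹ * g'))) ?_)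
  intro f
  simp [← mul_assoc, mul_inv_eq_one]

theorem FreeGroup.card_surjective_apply_eq_of_card_apply_eq {α : Type*} [Finite α]
    {u v : FreeGroup α}
    (h : ∀ (G : Type) [Group G] [Finite G] (g : G),
      Nat.card {φ : FreeGroup α →* G // φ u = g} = Nat.card {φ : FreeGroup α →* G // φ v = g})
    (G : Type) [Group G] [Finite G] (g : G) :
    Nat.card {φ : FreeGroup α →* G // Surjective φ ∧ φ u = g} =
      Nat.card {φ : FreeGroup α →* G // Surjective φ ∧ φ v = g} := by
  induction hn : Nat.card G using Nat.strong_induction_on generalizing G g with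
  | _ n ih =>
  classical
  have : Fintype (Subgroup G) := Fintype.ofFinite _
  have proper : ∀ H ∈ Finset.univ.erase (⊤ : Subgroup G),
      Nat.card {β : FreeGroup α →* H // Surjective β ∧ (β u : G) = g} =
        Nat.card {β : FreeGroup α →* H // Surjective β ∧ (β v : G) = g} := fun H hH =>
    MonoidHom.card_surjective_subgroup_congr (fun h => ih _ (hn ▸ H.card_le_card_group.lt_of_ne
      (mt H.card_eq_iff_eq_top.1 (Finset.ne_of_mem_erase hH))) H h rfl) g
  have hsum := h G g
  rw [MonoidHom.card_apply_eq_sum_card_surjective, MonoidHom.card_apply_eq_sum_card_surjective,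
    ← Finset.add_sum_erase _ _ (Finset.mem_univ ⊤),
    ← Finset.add_sum_erase _ _ (Finset.mem_univ ⊤), Finset.sum_congr rfl proper,
    MonoidHom.card_surjective_top, MonoidHom.card_surjective_top]
    at hsum
  exact Nat.add_right_cancel hsum

/-- if `w ∈ F_k` is measure preserving and `x₁` is an element of some basis of
`F_k`, then for every finite group `G` and every `g ∈ G`, the number of surjective
homomorphisms `α : F_k →* G` with `α w = g` equals the number of surjective homomorphisms
with `α x₁ = g`. -/
theorem measurePreserving_epi_count {k : ℕ} (w x₁ : FreeGroup (Fin k))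
    (hw : IsMeasurePreservingWord w)
    (hx₁ : ∃ s : Set (FreeGroup (Fin k)), IsFreeBasis s ∧ x₁ ∈ s) :
    ∀ (G : Type) [Group G] [Fintype G] (g : G),
      Nat.card {α : FreeGroup (Fin k) →* G // Function.Surjective α ∧ α w = g} =
        Nat.card {α : FreeGroup (Fin k) →* G // Function.Surjective α ∧ α x₁ = g} := by
  obtain ⟨s, hs, hx₁⟩ := hx₁
  have hb : hs.freeGroupBasis ⟨x₁, hx₁⟩ = x₁ := hs.freeGroupBasis_apply _
  have card_apply_eq (G : Type) [Group G] [Finite G] (g : G) :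
      Nat.card {α : FreeGroup (Fin k) →* G // α w = g} =
        Nat.card {α : FreeGroup (Fin k) →* G // α x₁ = g} := by
    have := Fintype.ofFinite G
    rw [← hb]
    exact Nat.card_fiber_eq_of_forall_card_fiber_eq (fun g g' => by rw [hw, hw])
      (hs.freeGroupBasis.card_monoidHom_apply_eq _) g
  exact fun G _ _ => FreeGroup.card_surjective_apply_eq_of_card_apply_eq card_apply_eq G
end

section
/- For every n ≥ 2, if σ and τ are two independent uniformly random permutations in S_n, then the probability that the commutator σ τ σ^{-1} τ^{-1} fixes the point 1 equals 1/(n−1). Equivalently, the number of pairs (σ, τ) ∈ S_n × S_n with στσ^{-1}τ^{-1}(1) = 1 equals (n!)^2/(n−1). -/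
/-!
With `a = σ⁻¹` and `b = τ⁻¹` the commutator fixes `x` iff `a (b x) = b (a x)`. Fibering over
`v = b x`, for fixed `a` we count the `b` with `b x = v` and `b (a x) = a v`: there are `(n-1)!`
of them if `a` fixes both `x` and `v`, `(n-2)!` if `a` moves both, and none otherwise. Summing over
`a` and `v` leaves the numbers of permutations fixing, resp. moving, two given points, and
inclusion–exclusion relates the second to the first.
-/

open Finset Equiv Nat

theorem Finset.card_filter_not_and_not_add_card_filter_add_card_filter {ι : Type*}
    [DecidableEq ι] (s : Finset ι) (p q : ι → Prop) [DecidablePred p] [DecidablePred q] :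
    #{x ∈ s | ¬p x ∧ ¬q x} + #{x ∈ s | p x} + #{x ∈ s | q x} = #s + #{x ∈ s | p x ∧ q x} := by
  have hor := card_filter_add_card_filter_not (s := s) (p := fun x => p x ∨ q x)
  simp only [not_or] at hor
  rw [filter_or] at hor
  rw [add_assoc, ← card_union_add_card_inter, ← filter_and, ← hor]
  ring

namespace Equiv.Perm

theorem commutator_apply_eq_self_iff {α : Type*} (σ τ : Perm α) (x : α) :
    (σ * τ * σ⁻¹ * τ⁻¹) x = x ↔ σ⁻¹ (τ⁻¹ x) = τ⁻¹ (σ⁻¹ x) := by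
  simp only [mul_apply, ← eq_inv_iff_eq (f := σ), ← eq_inv_iff_eq (f := τ)]

variable {α : Type*} [Fintype α] [DecidableEq α]

theorem card_eqOn (s : Finset α) (g : Perm α) :
    #{p : Perm α | ∀ a ∈ s, p a = g a} = (Fintype.card α - #s)! := by
  have e : {p : Perm α // ∀ a ∈ s, p a = g a} ≃ Perm {a // a ∉ s} :=
    (subtypeEquiv (Equiv.mulLeft g⁻¹) fun p => by simp [Perm.inv_def, symm_apply_eq]).trans
      (Perm.subtypeEquivSubtypePerm (· ∉ s)).symm
  rw [← Fintype.card_subtype, Fintype.card_congr e, Fintype.card_perm,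
    Fintype.card_subtype_compl, Fintype.card_coe]

theorem card_apply_eq (i j : α) : #{p : Perm α | p i = j} = (Fintype.card α - 1)! := by
  simpa using card_eqOn {i} (swap i j)

theorem card_apply_eq_and_apply_eq {i j k l : α} (hik : i ≠ k) (hjl : j ≠ l) :
    #{p : Perm α | p i = j ∧ p k = l} = (Fintype.card α - 2)! := by
  set g := swap (swap i j k) l * swap i j
  have hgi : g i = j := by
    have : swap i j k ≠ j := by simpa using (swap i j).injective.ne hik.symm
    simp [g, swap_apply_of_ne_of_ne this.symm hjl]
  have hgk : g k = l := by simp [g]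
  convert card_eqOn {i, k} g using 3
  · simp [hgi, hgk]
  · rw [card_pair hik]

theorem card_apply_eq_and_apply_eq_eq_ite (i j k l : α) :
    #{p : Perm α | p i = j ∧ p k = l} =
      (if k = i ∧ l = j then (Fintype.card α - 1)! else 0) +
        (if k ≠ i ∧ l ≠ j then (Fintype.card α - 2)! else 0) := by
  by_cases hki : k = i <;> by_cases hlj : l = j
  · subst hki hlj
    simpa using card_apply_eq k l
  · subst hki
    simp +contextual [hlj, Ne.symm hlj]
  · subst hlj
    have : ∀ p : Perm α, ¬(p i = l ∧ p k = l) := fun p h => hki (p.injective (h.2.trans h.1.symm))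
    simp [hki, this]
  · simpa [hki, hlj] using card_apply_eq_and_apply_eq (Ne.symm hki) (Ne.symm hlj)

theorem card_apply_apply_comm_eq_sum (x : α) :
    #{q : Perm α × Perm α | q.1 (q.2 x) = q.2 (q.1 x)} =
      ∑ v, ((Fintype.card α - 1)! * #{a : Perm α | a x = x ∧ a v = v} +
        (Fintype.card α - 2)! * #{a : Perm α | a x ≠ x ∧ a v ≠ v}) := by
  have fiber (a : Perm α) : #{b : Perm α | a (b x) = b (a x)} =
      ∑ v, #{b : Perm α | b x = v ∧ b (a x) = a v} := by
    rw [card_eq_sum_card_fiberwise (f := fun b : Perm α => b x) (t := univ) (by simp)]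
    refine sum_congr rfl fun v _ => ?_
    rw [filter_filter]
    congr! 2 with b
    constructor
    · rintro ⟨h, rfl⟩; exact ⟨rfl, h.symm⟩
    · rintro ⟨rfl, h⟩; exact ⟨h.symm, rfl⟩
  calc #{q : Perm α × Perm α | q.1 (q.2 x) = q.2 (q.1 x)}
      = ∑ a : Perm α, ∑ v, #{b : Perm α | b x = v ∧ b (a x) = a v} := by
        rw [card_filter, Fintype.sum_prod_type]
        simp only [← card_filter, fiber]
    _ = ∑ v, ∑ a : Perm α, ((if a x = x ∧ a v = v then (Fintype.card α - 1)! else 0) +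
          (if a x ≠ x ∧ a v ≠ v then (Fintype.card α - 2)! else 0)) := by
        rw [sum_comm]
        simp only [card_apply_eq_and_apply_eq_eq_ite]
    _ = _ := by simp [sum_add_distrib, ← sum_filter, mul_comm]

theorem sum_card_apply_eq_self_and_apply_eq_self (x : α) :
    ∑ v, #{a : Perm α | a x = x ∧ a v = v} =
      (Fintype.card α - 1)! + (Fintype.card α - 1) * (Fintype.card α - 2)! := by
  simp [card_apply_eq_and_apply_eq_eq_ite, sum_add_distrib, sum_ite, filter_ne']

theorem sum_card_apply_ne_self_and_apply_ne_self_add (x : α) :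
    ∑ v, #{a : Perm α | a x ≠ x ∧ a v ≠ v} + 2 * Fintype.card α * (Fintype.card α - 1)! =
      Fintype.card α * (Fintype.card α)! + ∑ v, #{a : Perm α | a x = x ∧ a v = v} := by
  have h v := card_filter_not_and_not_add_card_filter_add_card_filter univ
    (fun a : Perm α => a x = x) (fun a => a v = v)
  simp only [card_apply_eq] at h
  have := sum_congr rfl fun v (_ : v ∈ univ) => h v
  simp only [sum_add_distrib, sum_const, Finset.card_univ, Fintype.card_perm, smul_eq_mul] at this
  linarith

theorem card_apply_apply_comm_mul (x : α) (hα : 2 ≤ Fintype.card α) :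
    #{q : Perm α × Perm α | q.1 (q.2 x) = q.2 (q.1 x)} * (Fintype.card α - 1) =
      (Fintype.card α)! ^ 2 := by
  obtain ⟨m, hm⟩ : ∃ m, Fintype.card α = m + 2 := ⟨_, (Nat.sub_add_cancel hα).symm⟩
  have hD := sum_card_apply_eq_self_and_apply_eq_self x
  have hM := sum_card_apply_ne_self_and_apply_ne_self_add x
  rw [card_apply_apply_comm_eq_sum, sum_add_distrib, ← mul_sum, ← mul_sum]
  have hm1 : Fintype.card α - 1 = m + 1 := by omega
  have hm2 : Fintype.card α - 2 = m := by omega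
  simp only [hm1, hm2] at hD hM ⊢
  rw [hm] at hM ⊢
  have f1 : (m + 1)! = (m + 1) * m ! := factorial_succ m
  have f2 : (m + 2)! = (m + 2) * (m + 1)! := factorial_succ (m + 1)
  set D := ∑ v, #{a : Perm α | a x = x ∧ a v = v}
  set M := ∑ v, #{a : Perm α | a x ≠ x ∧ a v ≠ v}
  zify at hD hM f1 f2 ⊢
  linear_combination (m + 1)! * hM + (m + 2) * (m + 1)! * hD -
    (M + (m + 2) * (m + 1)!) * f1 - (m + 2)! * f2

end Equiv.Perm

/-- for `n ≥ 2`, the number of pairs `(σ, τ)` of permutations of `{1,…,n}` whose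
commutator `σ τ σ⁻¹ τ⁻¹` fixes a given point equals `(n!)^2 / (n-1)`; equivalently, the
probability that the commutator of two independent uniformly random permutations fixes the
point is `1 / (n-1)`. -/
theorem commutator_fixes_point_count (n : ℕ) (hn : 2 ≤ n) :
    Nat.card {p : Equiv.Perm (Fin n) × Equiv.Perm (Fin n) //
        (p.1 * p.2 * p.1⁻¹ * p.2⁻¹) ⟨0, by omega⟩ = ⟨0, by omega⟩} * (n - 1) =
      n.factorial ^ 2 := by
  set z : Fin n := ⟨0, by omega⟩
  have e := subtypeEquiv (q := fun q : Perm (Fin n) × Perm (Fin n) => q.1 (q.2 z) = q.2 (q.1 z))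
    ((Equiv.inv _).prodCongr (Equiv.inv _)) fun q => Perm.commutator_apply_eq_self_iff q.1 q.2 z
  rw [Nat.card_congr e, Nat.card_eq_fintype_card, Fintype.card_subtype]
  simpa using Perm.card_apply_apply_comm_mul z (by simpa using hn)
end
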